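/- arXiv:2107.11435 — 2 statements merged into one kernel-verified Lean document; each statement's English description precedes it below -/
import Mathlib

section
/- (Population version of the paper's Theorem 1, the unsupervised domain adaptation risk bound.) Let X and Z be measurable spaces, Y a type, H a nonempty family of functions from Z to Y, W a nonempty family of measurable functions from X to Z, μ_S and μ_T probability measures on X (the source and target data distributions), and f_S, f_T : X → Y labeling functions; assume all disagreement sets appearing below are measurable. Then for every h, h* ∈ H and every w, w* ∈ W: ε_{μ_T}(h∘w; f_T) ≤ ε_{μ_S}(h∘w; f_S) + 2·ε_{μ_S}(h∘w*; f_S) + (1/2)·d_{H∆H}(map w* μ_S, map w* μ_T) + (1/2)·sup_{ĥ ∈ H} d_{ĥ,W∆W}(μ_S, μ_T) + ε_{μ_T}(h*∘w*; f_T) + ε_{μ_S}(h*∘w*; f_S), where map w* μ denotes the pushforward of μ along w*. -/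
open MeasureTheory

/-- Disagreement risk `ε_μ(g; f) = μ {x | g x ≠ f x}` (as a real number). -/
noncomputable def riskEps {X : Type*} [MeasurableSpace X] {Y : Type*}
    (μ : Measure X) (g f : X → Y) : ℝ :=
  (μ {x | g x ≠ f x}).toReal

/-- The `H∆H`-divergence between two probability measures `κ, λ` on the feature space `Z`. -/
noncomputable def dHDeltaH {Z : Type*} [MeasurableSpace Z] {Y : Type*}
    (H : Set (Z → Y)) (κ ν : Measure Z) : ℝ :=
  2 * sSup {r : ℝ | ∃ h ∈ H, ∃ h' ∈ H,
    r = |(κ {z | h z ≠ h' z}).toReal - (ν {z | h z ≠ h' z}).toReal|}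

/-- The divergence `d_{h,W∆W}(μ, ν)`. -/
noncomputable def dWDeltaW {X Z : Type*} [MeasurableSpace X] {Y : Type*}
    (h : Z → Y) (W : Set (X → Z)) (μ ν : Measure X) : ℝ :=
  2 * sSup {r : ℝ | ∃ w ∈ W, ∃ w' ∈ W,
    r = |(ν {x | h (w x) ≠ h (w' x)}).toReal - (μ {x | h (w x) ≠ h (w' x)}).toReal|}

/-- Triangle inequality for disagreement probabilities. -/
lemma risk_tri {X : Type*} [MeasurableSpace X] {Y : Type*}
    (μ : Measure X) [IsFiniteMeasure μ] (g k f : X → Y) :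
    (μ {x | g x ≠ f x}).toReal ≤ (μ {x | g x ≠ k x}).toReal + (μ {x | k x ≠ f x}).toReal := by
  have hsub : {x | g x ≠ f x} ⊆ {x | g x ≠ k x} ∪ {x | k x ≠ f x} := by
    intro x hx
    by_contra hc
    simp only [Set.mem_union, Set.mem_setOf_eq, not_or, not_not] at hc
    exact hx (hc.1.trans hc.2)
  have h1 : μ {x | g x ≠ f x} ≤ μ {x | g x ≠ k x} + μ {x | k x ≠ f x} :=
    (measure_mono hsub).trans (measure_union_le _ _)
  have h2 := ENNReal.toReal_mono
    (ENNReal.add_ne_top.mpr ⟨measure_ne_top μ _, measure_ne_top μ _⟩) h1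
  rwa [ENNReal.toReal_add (measure_ne_top μ _) (measure_ne_top μ _)] at h2

lemma abs_diff_toReal_le_one {Z : Type*} [MeasurableSpace Z]
    (κ ν : Measure Z) [IsProbabilityMeasure κ] [IsProbabilityMeasure ν] (s t : Set Z) :
    |(κ s).toReal - (ν t).toReal| ≤ 1 := by
  have h1 : (κ s).toReal ≤ 1 := by
    simpa using ENNReal.toReal_mono ENNReal.one_ne_top (prob_le_one (μ := κ) (s := s))
  have h2 : (ν t).toReal ≤ 1 := by
    simpa using ENNReal.toReal_mono ENNReal.one_ne_top (prob_le_one (μ := ν) (s := t))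
  have h3 : (0:ℝ) ≤ (κ s).toReal := ENNReal.toReal_nonneg
  have h4 : (0:ℝ) ≤ (ν t).toReal := ENNReal.toReal_nonneg
  rw [abs_sub_le_iff]; constructor <;> linarith

/-- Population version of the unsupervised domain adaptation risk bound (Theorem 1). -/
theorem uda_risk_bound {X Z : Type*} [MeasurableSpace X] [MeasurableSpace Z] {Y : Type*}
    (H : Set (Z → Y)) (hHne : H.Nonempty)
    (W : Set (X → Z)) (hWne : W.Nonempty) (hWmeas : ∀ w ∈ W, Measurable w)
    (μS μT : Measure X) [IsProbabilityMeasure μS] [IsProbabilityMeasure μT]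
    (fS fT : X → Y)
    -- measurability of all the disagreement sets appearing in the bound
    (hmeasHH : ∀ h₁ ∈ H, ∀ h₂ ∈ H, MeasurableSet {z : Z | h₁ z ≠ h₂ z})
    (hmeasWW : ∀ h₀ ∈ H, ∀ w₁ ∈ W, ∀ w₂ ∈ W, MeasurableSet {x | h₀ (w₁ x) ≠ h₀ (w₂ x)})
    (hmeasRisk : ∀ h₀ ∈ H, ∀ w₀ ∈ W,
      MeasurableSet {x | h₀ (w₀ x) ≠ fS x} ∧ MeasurableSet {x | h₀ (w₀ x) ≠ fT x})
    (h hstar : Z → Y) (hh : h ∈ H) (hhstar : hstar ∈ H)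
    (w wstar : X → Z) (hw : w ∈ W) (hwstar : wstar ∈ W) :
    riskEps μT (fun x => h (w x)) fT
      ≤ riskEps μS (fun x => h (w x)) fS
        + 2 * riskEps μS (fun x => h (wstar x)) fS
        + (1 / 2) * dHDeltaH H (μS.map wstar) (μT.map wstar)
        + (1 / 2) * sSup {r : ℝ | ∃ h₀ ∈ H, r = dWDeltaW h₀ W μS μT}
        + riskEps μT (fun x => hstar (wstar x)) fT
        + riskEps μS (fun x => hstar (wstar x)) fS := by
  have hwsm := hWmeas wstar hwstar
  have hmapS : IsProbabilityMeasure (μS.map wstar) := Measure.isProbabilityMeasure_map hwsm.aemeasurable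
  have hmapT : IsProbabilityMeasure (μT.map wstar) := Measure.isProbabilityMeasure_map hwsm.aemeasurable
  -- two triangle inequalities on the target
  have tri1 : riskEps μT (fun x => h (w x)) fT
      ≤ (μT {x | h (w x) ≠ h (wstar x)}).toReal
        + (μT {x | h (wstar x) ≠ hstar (wstar x)}).toReal
        + riskEps μT (fun x => hstar (wstar x)) fT := by
    have t1 := risk_tri μT (fun x => h (w x)) (fun x => h (wstar x)) fT
    have t2 := risk_tri μT (fun x => h (wstar x)) (fun x => hstar (wstar x)) fT
    simp only [riskEps] at *
    linarith
  -- bound the W-shift term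
  have hWabs : (μT {x | h (w x) ≠ h (wstar x)}).toReal
      ≤ (μS {x | h (w x) ≠ h (wstar x)}).toReal + (1/2) * dWDeltaW h W μS μT := by
    set r0 := |(μT {x | h (w x) ≠ h (wstar x)}).toReal
      - (μS {x | h (w x) ≠ h (wstar x)}).toReal| with hr0
    have hmem : r0 ∈ {r : ℝ | ∃ w₁ ∈ W, ∃ w' ∈ W,
        r = |(μT {x | h (w₁ x) ≠ h (w' x)}).toReal - (μS {x | h (w₁ x) ≠ h (w' x)}).toReal|} :=
      ⟨w, hw, wstar, hwstar, rfl⟩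
    have hbdd : BddAbove {r : ℝ | ∃ w₁ ∈ W, ∃ w' ∈ W,
        r = |(μT {x | h (w₁ x) ≠ h (w' x)}).toReal - (μS {x | h (w₁ x) ≠ h (w' x)}).toReal|} := by
      refine ⟨1, ?_⟩
      rintro r ⟨w₁, _, w', _, rfl⟩
      exact abs_diff_toReal_le_one μT μS _ _
    have hle := le_csSup hbdd hmem
    have habs : (μT {x | h (w x) ≠ h (wstar x)}).toReal
        - (μS {x | h (w x) ≠ h (wstar x)}).toReal ≤ r0 := le_abs_self _
    have : (1/2) * dWDeltaW h W μS μT = sSup {r : ℝ | ∃ w₁ ∈ W, ∃ w' ∈ W,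
        r = |(μT {x | h (w₁ x) ≠ h (w' x)}).toReal - (μS {x | h (w₁ x) ≠ h (w' x)}).toReal|} := by
      simp [dWDeltaW]
    linarith [this ▸ (habs.trans hle)]
  -- the W term is below the sup over H
  have hWsup : (1/2) * dWDeltaW h W μS μT
      ≤ (1/2) * sSup {r : ℝ | ∃ h₀ ∈ H, r = dWDeltaW h₀ W μS μT} := by
    have hb : BddAbove {r : ℝ | ∃ h₀ ∈ H, r = dWDeltaW h₀ W μS μT} := by
      refine ⟨2, ?_⟩
      rintro r ⟨h₀, _, rfl⟩
      have hinnerne : {r : ℝ | ∃ w₁ ∈ W, ∃ w' ∈ W,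
          r = |(μT {x | h₀ (w₁ x) ≠ h₀ (w' x)}).toReal
            - (μS {x | h₀ (w₁ x) ≠ h₀ (w' x)}).toReal|}.Nonempty := by
        obtain ⟨w₁, hw₁⟩ := hWne
        exact ⟨_, w₁, hw₁, w₁, hw₁, rfl⟩
      have hle1 : sSup {r : ℝ | ∃ w₁ ∈ W, ∃ w' ∈ W,
          r = |(μT {x | h₀ (w₁ x) ≠ h₀ (w' x)}).toReal
            - (μS {x | h₀ (w₁ x) ≠ h₀ (w' x)}).toReal|} ≤ 1 := by
        refine csSup_le hinnerne ?_
        rintro r ⟨w₁, _, w', _, rfl⟩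
        exact abs_diff_toReal_le_one μT μS _ _
      calc dWDeltaW h₀ W μS μT = 2 * _ := rfl
        _ ≤ 2 * 1 := by linarith [hle1]
        _ = 2 := by norm_num
    have hmem : dWDeltaW h W μS μT ∈ {r : ℝ | ∃ h₀ ∈ H, r = dWDeltaW h₀ W μS μT} :=
      ⟨h, hh, rfl⟩
    have := le_csSup hb hmem
    linarith
  -- bound the H-shift term via the pushforward measures
  have hmapSeq : (μS.map wstar) {z | h z ≠ hstar z} = μS {x | h (wstar x) ≠ hstar (wstar x)} := by
    rw [Measure.map_apply hwsm (hmeasHH h hh hstar hhstar)]; rfl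
  have hmapTeq : (μT.map wstar) {z | h z ≠ hstar z} = μT {x | h (wstar x) ≠ hstar (wstar x)} := by
    rw [Measure.map_apply hwsm (hmeasHH h hh hstar hhstar)]; rfl
  have hHabs : (μT {x | h (wstar x) ≠ hstar (wstar x)}).toReal
      ≤ (μS {x | h (wstar x) ≠ hstar (wstar x)}).toReal
        + (1/2) * dHDeltaH H (μS.map wstar) (μT.map wstar) := by
    set S := {z : Z | h z ≠ hstar z} with hS
    have hmem : |((μS.map wstar) S).toReal - ((μT.map wstar) S).toReal|
        ∈ {r : ℝ | ∃ h₁ ∈ H, ∃ h' ∈ H,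
          r = |((μS.map wstar) {z | h₁ z ≠ h' z}).toReal
            - ((μT.map wstar) {z | h₁ z ≠ h' z}).toReal|} :=
      ⟨h, hh, hstar, hhstar, rfl⟩
    have hbdd : BddAbove {r : ℝ | ∃ h₁ ∈ H, ∃ h' ∈ H,
        r = |((μS.map wstar) {z | h₁ z ≠ h' z}).toReal
          - ((μT.map wstar) {z | h₁ z ≠ h' z}).toReal|} := by
      refine ⟨1, ?_⟩
      rintro r ⟨h₁, _, h', _, rfl⟩
      exact abs_diff_toReal_le_one _ _ _ _
    have hle := le_csSup hbdd hmem
    have heq : (1/2) * dHDeltaH H (μS.map wstar) (μT.map wstar)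
        = sSup {r : ℝ | ∃ h₁ ∈ H, ∃ h' ∈ H,
          r = |((μS.map wstar) {z | h₁ z ≠ h' z}).toReal
            - ((μT.map wstar) {z | h₁ z ≠ h' z}).toReal|} := by
      simp [dHDeltaH]
    have habs : ((μT.map wstar) S).toReal - ((μS.map wstar) S).toReal
        ≤ |((μS.map wstar) S).toReal - ((μT.map wstar) S).toReal| := by
      rw [abs_sub_comm]; exact le_abs_self _
    rw [← hmapSeq, ← hmapTeq]
    linarith [heq ▸ (habs.trans hle)]
  -- source-side triangle inequalities
  have triS1 : (μS {x | h (w x) ≠ h (wstar x)}).toReal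
      ≤ riskEps μS (fun x => h (w x)) fS + riskEps μS (fun x => h (wstar x)) fS := by
    have t := risk_tri μS (fun x => h (w x)) fS (fun x => h (wstar x))
    have hsym : (μS {x | fS x ≠ h (wstar x)}) = μS {x | h (wstar x) ≠ fS x} := by
      congr 1; ext x; exact ne_comm
    simp only [riskEps] at *
    rw [hsym] at t
    linarith
  have triS2 : (μS {x | h (wstar x) ≠ hstar (wstar x)}).toReal
      ≤ riskEps μS (fun x => h (wstar x)) fS + riskEps μS (fun x => hstar (wstar x)) fS := by
    have t := risk_tri μS (fun x => h (wstar x)) fS (fun x => hstar (wstar x))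
    have hsym : (μS {x | fS x ≠ hstar (wstar x)}) = μS {x | hstar (wstar x) ≠ fS x} := by
      congr 1; ext x; exact ne_comm
    simp only [riskEps] at *
    rw [hsym] at t
    linarith
  linarith
end

section
/- (Population version of the paper's multi-task unsupervised domain adaptation bound, Theorem 3.) Let X and Z be measurable spaces, Y a type, H a nonempty family of functions from Z to Y, W a nonempty family of measurable functions from X to Z. Let M ≥ 1 and for each task m ∈ {1, …, M} let μ_{S,m} and μ_{T,m} be probability measures on X with labeling functions f_{S,m}, f_{T,m} : X → Y; assume all disagreement sets appearing below are measurable. Then for every shared feature maps w, w* ∈ W and every task-specific hypotheses h_1, …, h_M, h*_1, …, h*_M ∈ H, the task-averaged target risk satisfies: (1/M)·Σ_{m=1}^M ε_{μ_{T,m}}(h_m∘w; f_{T,m}) ≤ (1/M)·Σ_{m=1}^M [ ε_{μ_{S,m}}(h_m∘w; f_{S,m}) + 2·ε_{μ_{S,m}}(h_m∘w*; f_{S,m}) + (1/2)·d_{H∆H}(map w* μ_{S,m}, map w* μ_{T,m}) + (1/2)·sup_{ĥ ∈ H} d_{ĥ,W∆W}(μ_{S,m}, μ_{T,m}) + ε_{μ_{T,m}}(h*_m∘w*;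 f_{T,m}) + ε_{μ_{S,m}}(h*_m∘w*; f_{S,m}) ]. -/
open MeasureTheory

lemma prob_toReal_le_one {X : Type*} [MeasurableSpace X] (μ : Measure X)
    [IsProbabilityMeasure μ] (s : Set X) : (μ s).toReal ≤ 1 := by
  have h := measure_mono (Set.subset_univ s) (μ := μ)
  have := ENNReal.toReal_mono (by simp) h
  simpa using this

lemma riskEps_triangle {X : Type*} [MeasurableSpace X] {Y : Type*}
    (μ : Measure X) [IsProbabilityMeasure μ] (a b c : X → Y) :
    riskEps μ a c ≤ riskEps μ a b + riskEps μ b c := by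
  unfold riskEps
  have hsub : {x | a x ≠ c x} ⊆ {x | a x ≠ b x} ∪ {x | b x ≠ c x} := by
    intro x hx
    by_contra hcon
    simp only [Set.mem_union, Set.mem_setOf_eq, not_or, not_not] at hcon
    exact hx (hcon.1.trans hcon.2)
  have h1 : μ {x | a x ≠ c x} ≤ μ {x | a x ≠ b x} + μ {x | b x ≠ c x} :=
    (measure_mono hsub).trans (measure_union_le _ _)
  have := ENNReal.toReal_mono (by finiteness) h1
  rwa [ENNReal.toReal_add (by finiteness) (by finiteness)] at this

lemma riskEps_comm {X : Type*} [MeasurableSpace X] {Y : Type*}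
    (μ : Measure X) (a b : X → Y) : riskEps μ a b = riskEps μ b a := by
  unfold riskEps
  have hset : {x | a x ≠ b x} = {x | b x ≠ a x} := Set.ext fun x => ne_comm
  rw [hset]

/-- Population version of the multi-task unsupervised domain adaptation bound (Theorem 3). -/
theorem multitask_uda_risk_bound {X Z : Type*} [MeasurableSpace X] [MeasurableSpace Z]
    {Y : Type*}
    (H : Set (Z → Y)) (hHne : H.Nonempty)
    (W : Set (X → Z)) (hWne : W.Nonempty) (hWmeas : ∀ w ∈ W, Measurable w)
    (M : ℕ) (hM : 1 ≤ M)
    (μS μT : Fin M → Measure X)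
    [∀ m, IsProbabilityMeasure (μS m)] [∀ m, IsProbabilityMeasure (μT m)]
    (fS fT : Fin M → X → Y)
    -- measurability of all the disagreement sets appearing in the bound
    (hmeasHH : ∀ h₁ ∈ H, ∀ h₂ ∈ H, MeasurableSet {z : Z | h₁ z ≠ h₂ z})
    (hmeasWW : ∀ h₀ ∈ H, ∀ w₁ ∈ W, ∀ w₂ ∈ W, MeasurableSet {x | h₀ (w₁ x) ≠ h₀ (w₂ x)})
    (hmeasRisk : ∀ m : Fin M, ∀ h₀ ∈ H, ∀ w₀ ∈ W,
      MeasurableSet {x | h₀ (w₀ x) ≠ fS m x} ∧ MeasurableSet {x | h₀ (w₀ x) ≠ fT m x})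
    (w wstar : X → Z) (hw : w ∈ W) (hwstar : wstar ∈ W)
    (h hstar : Fin M → Z → Y) (hh : ∀ m, h m ∈ H) (hhstar : ∀ m, hstar m ∈ H) :
    (1 / (M : ℝ)) * ∑ m : Fin M, riskEps (μT m) (fun x => h m (w x)) (fT m)
      ≤ (1 / (M : ℝ)) * ∑ m : Fin M,
          (riskEps (μS m) (fun x => h m (w x)) (fS m)
            + 2 * riskEps (μS m) (fun x => h m (wstar x)) (fS m)
            + (1 / 2) * dHDeltaH H ((μS m).map wstar) ((μT m).map wstar)
            + (1 / 2) * sSup {r : ℝ | ∃ h₀ ∈ H, r = dWDeltaW h₀ W (μS m) (μT m)}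
            + riskEps (μT m) (fun x => hstar m (wstar x)) (fT m)
            + riskEps (μS m) (fun x => hstar m (wstar x)) (fS m)) := by
  have hM0 : (0:ℝ) ≤ 1 / (M : ℝ) := by positivity
  refine mul_le_mul_of_nonneg_left (Finset.sum_le_sum fun m _ => ?_) hM0
  haveI : IsProbabilityMeasure ((μS m).map wstar) :=
    Measure.isProbabilityMeasure_map (hWmeas wstar hwstar).aemeasurable
  haveI : IsProbabilityMeasure ((μT m).map wstar) :=
    Measure.isProbabilityMeasure_map (hWmeas wstar hwstar).aemeasurable
  -- triangle inequalities on the target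
  have tri1 : riskEps (μT m) (fun x => h m (w x)) (fT m)
      ≤ riskEps (μT m) (fun x => h m (w x)) (fun x => hstar m (wstar x))
        + riskEps (μT m) (fun x => hstar m (wstar x)) (fT m) :=
    riskEps_triangle _ _ _ _
  have tri2 : riskEps (μT m) (fun x => h m (w x)) (fun x => hstar m (wstar x))
      ≤ riskEps (μT m) (fun x => h m (w x)) (fun x => h m (wstar x))
        + riskEps (μT m) (fun x => h m (wstar x)) (fun x => hstar m (wstar x)) :=
    riskEps_triangle _ _ _ _
  -- Step A : W∆W divergence bound
  have bddInner : ∀ h₀ : Z → Y, BddAbove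
      {r : ℝ | ∃ w₁ ∈ W, ∃ w₂ ∈ W,
        r = |((μT m) {x | h₀ (w₁ x) ≠ h₀ (w₂ x)}).toReal
            - ((μS m) {x | h₀ (w₁ x) ≠ h₀ (w₂ x)}).toReal|} := by
    intro h₀
    refine ⟨1, ?_⟩
    rintro r ⟨w₁, hw₁, w₂, hw₂, rfl⟩
    have h1 := prob_toReal_le_one (μT m) {x | h₀ (w₁ x) ≠ h₀ (w₂ x)}
    have h2 := prob_toReal_le_one (μS m) {x | h₀ (w₁ x) ≠ h₀ (w₂ x)}
    have h3 : (0:ℝ) ≤ ((μT m) {x | h₀ (w₁ x) ≠ h₀ (w₂ x)}).toReal := ENNReal.toReal_nonneg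
    have h4 : (0:ℝ) ≤ ((μS m) {x | h₀ (w₁ x) ≠ h₀ (w₂ x)}).toReal := ENNReal.toReal_nonneg
    rw [abs_sub_le_iff]
    constructor <;> linarith
  have hA1 : riskEps (μT m) (fun x => h m (w x)) (fun x => h m (wstar x))
      - riskEps (μS m) (fun x => h m (w x)) (fun x => h m (wstar x))
      ≤ sSup {r : ℝ | ∃ w₁ ∈ W, ∃ w₂ ∈ W,
        r = |((μT m) {x | h m (w₁ x) ≠ h m (w₂ x)}).toReal
            - ((μS m) {x | h m (w₁ x) ≠ h m (w₂ x)}).toReal|} :=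
    (le_abs_self _).trans (le_csSup (bddInner (h m)) ⟨w, hw, wstar, hwstar, rfl⟩)
  have hdW : dWDeltaW (h m) W (μS m) (μT m)
      = 2 * sSup {r : ℝ | ∃ w₁ ∈ W, ∃ w₂ ∈ W,
        r = |((μT m) {x | h m (w₁ x) ≠ h m (w₂ x)}).toReal
            - ((μS m) {x | h m (w₁ x) ≠ h m (w₂ x)}).toReal|} := rfl
  have bddOuter : BddAbove {r : ℝ | ∃ h₀ ∈ H, r = dWDeltaW h₀ W (μS m) (μT m)} := by
    refine ⟨2, ?_⟩
    rintro r ⟨h₀, hh₀, rfl⟩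
    have hsle : sSup {r : ℝ | ∃ w₁ ∈ W, ∃ w₂ ∈ W,
        r = |((μT m) {x | h₀ (w₁ x) ≠ h₀ (w₂ x)}).toReal
            - ((μS m) {x | h₀ (w₁ x) ≠ h₀ (w₂ x)}).toReal|} ≤ 1 := by
      refine csSup_le ⟨_, w, hw, w, hw, rfl⟩ ?_
      rintro r ⟨w₁, hw₁, w₂, hw₂, rfl⟩
      have h1 := prob_toReal_le_one (μT m) {x | h₀ (w₁ x) ≠ h₀ (w₂ x)}
      have h2 := prob_toReal_le_one (μS m) {x | h₀ (w₁ x) ≠ h₀ (w₂ x)}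
      have h3 : (0:ℝ) ≤ ((μT m) {x | h₀ (w₁ x) ≠ h₀ (w₂ x)}).toReal := ENNReal.toReal_nonneg
      have h4 : (0:ℝ) ≤ ((μS m) {x | h₀ (w₁ x) ≠ h₀ (w₂ x)}).toReal := ENNReal.toReal_nonneg
      rw [abs_sub_le_iff]
      constructor <;> linarith
    show dWDeltaW h₀ W (μS m) (μT m) ≤ 2
    unfold dWDeltaW
    linarith
  have hA2 : dWDeltaW (h m) W (μS m) (μT m)
      ≤ sSup {r : ℝ | ∃ h₀ ∈ H, r = dWDeltaW h₀ W (μS m) (μT m)} :=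
    le_csSup bddOuter ⟨h m, hh m, rfl⟩
  have hA : riskEps (μT m) (fun x => h m (w x)) (fun x => h m (wstar x))
      ≤ riskEps (μS m) (fun x => h m (w x)) (fun x => h m (wstar x))
        + (1/2) * sSup {r : ℝ | ∃ h₀ ∈ H, r = dWDeltaW h₀ W (μS m) (μT m)} := by
    linarith
  -- Step B : H∆H divergence bound
  have hmapS : ((μS m).map wstar) {z | h m z ≠ hstar m z}
      = (μS m) {x | h m (wstar x) ≠ hstar m (wstar x)} :=
    Measure.map_apply (hWmeas wstar hwstar) (hmeasHH _ (hh m) _ (hhstar m))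
  have hmapT : ((μT m).map wstar) {z | h m z ≠ hstar m z}
      = (μT m) {x | h m (wstar x) ≠ hstar m (wstar x)} :=
    Measure.map_apply (hWmeas wstar hwstar) (hmeasHH _ (hh m) _ (hhstar m))
  have bddB : BddAbove {r : ℝ | ∃ h₁ ∈ H, ∃ h₂ ∈ H,
      r = |(((μS m).map wstar) {z | h₁ z ≠ h₂ z}).toReal
          - (((μT m).map wstar) {z | h₁ z ≠ h₂ z}).toReal|} := by
    refine ⟨1, ?_⟩
    rintro r ⟨h₁, hh₁, h₂, hh₂, rfl⟩
    have h1 := prob_toReal_le_one ((μS m).map wstar) {z | h₁ z ≠ h₂ z}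
    have h2 := prob_toReal_le_one ((μT m).map wstar) {z | h₁ z ≠ h₂ z}
    have h3 : (0:ℝ) ≤ (((μS m).map wstar) {z | h₁ z ≠ h₂ z}).toReal := ENNReal.toReal_nonneg
    have h4 : (0:ℝ) ≤ (((μT m).map wstar) {z | h₁ z ≠ h₂ z}).toReal := ENNReal.toReal_nonneg
    rw [abs_sub_le_iff]
    constructor <;> linarith
  have hB1 : riskEps (μT m) (fun x => h m (wstar x)) (fun x => hstar m (wstar x))
      - riskEps (μS m) (fun x => h m (wstar x)) (fun x => hstar m (wstar x))
      ≤ sSup {r : ℝ | ∃ h₁ ∈ H, ∃ h₂ ∈ H,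
        r = |(((μS m).map wstar) {z | h₁ z ≠ h₂ z}).toReal
            - (((μT m).map wstar) {z | h₁ z ≠ h₂ z}).toReal|} := by
    have hmem : |(((μS m).map wstar) {z | h m z ≠ hstar m z}).toReal
        - (((μT m).map wstar) {z | h m z ≠ hstar m z}).toReal|
        ∈ {r : ℝ | ∃ h₁ ∈ H, ∃ h₂ ∈ H,
          r = |(((μS m).map wstar) {z | h₁ z ≠ h₂ z}).toReal
              - (((μT m).map wstar) {z | h₁ z ≠ h₂ z}).toReal|} :=
      ⟨h m, hh m, hstar m, hhstar m, rfl⟩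
    have habs : riskEps (μT m) (fun x => h m (wstar x)) (fun x => hstar m (wstar x))
        - riskEps (μS m) (fun x => h m (wstar x)) (fun x => hstar m (wstar x))
        ≤ |(((μS m).map wstar) {z | h m z ≠ hstar m z}).toReal
            - (((μT m).map wstar) {z | h m z ≠ hstar m z}).toReal| := by
      rw [hmapS, hmapT, abs_sub_comm]
      exact le_abs_self _
    exact habs.trans (le_csSup bddB hmem)
  have hdH : dHDeltaH H ((μS m).map wstar) ((μT m).map wstar)
      = 2 * sSup {r : ℝ | ∃ h₁ ∈ H, ∃ h₂ ∈ H,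
        r = |(((μS m).map wstar) {z | h₁ z ≠ h₂ z}).toReal
            - (((μT m).map wstar) {z | h₁ z ≠ h₂ z}).toReal|} := rfl
  have hB : riskEps (μT m) (fun x => h m (wstar x)) (fun x => hstar m (wstar x))
      ≤ riskEps (μS m) (fun x => h m (wstar x)) (fun x => hstar m (wstar x))
        + (1/2) * dHDeltaH H ((μS m).map wstar) ((μT m).map wstar) := by
    linarith
  -- source-side triangles
  have hS1 : riskEps (μS m) (fun x => h m (w x)) (fun x => h m (wstar x))
      ≤ riskEps (μS m) (fun x => h m (w x)) (fS m)
        + riskEps (μS m) (fun x => h m (wstar x)) (fS m) := by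
    have := riskEps_triangle (μS m) (fun x => h m (w x)) (fS m) (fun x => h m (wstar x))
    rwa [riskEps_comm (μS m) (fS m) (fun x => h m (wstar x))] at this
  have hS2 : riskEps (μS m) (fun x => h m (wstar x)) (fun x => hstar m (wstar x))
      ≤ riskEps (μS m) (fun x => h m (wstar x)) (fS m)
        + riskEps (μS m) (fun x => hstar m (wstar x)) (fS m) := by
    have := riskEps_triangle (μS m) (fun x => h m (wstar x)) (fS m) (fun x => hstar m (wstar x))
    rwa [riskEps_comm (μS m) (fS m) (fun x => hstar m (wstar x))] at this
  linarith
end
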